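/- arXiv:math/0610387 — 2 statements merged into one kernel-verified Lean document; each statement's English description precedes it below -/
import Mathlib

section
/- Let Γ be a crystallographic group of rank n with translation subgroup A, let C be a maximal cyclic subgroup of A generated by translation by v, and let N_Γ(C) be its normalizer in Γ. The induced action of N_Γ(C)/C on the quotient ℝ^{n-1}(C) ≅ ℝⁿ/ℝv gives a homomorphism j_C : N_Γ(C)/C → Iso(ℝ^{n-1}(C)) whose kernel has at most two elements. -/
noncomputable section

/-- Euclidean `n`-space `ℝⁿ`. -/
abbrev Eucl (n : ℕ) := EuclideanSpace ℝ (Fin n)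

/-- The isometry group of `ℝⁿ`. -/
abbrev IsoRn (n : ℕ) := Eucl n ≃ᵢ Eucl n

/-- `g` is the translation by the vector `v`. -/
def IsTranslationBy {n : ℕ} (g : IsoRn n) (v : Eucl n) : Prop := ∀ x, g x = x + v

/-- The subgroup `Trans(ℝⁿ)` of translations of `ℝⁿ`. -/
def Translations (n : ℕ) : Subgroup (IsoRn n) where
  carrier := {g | ∃ v, IsTranslationBy g v}
  one_mem' := ⟨0, fun x => by simp [IsTranslationBy]⟩
  mul_mem' := by
    rintro g h ⟨v, hv⟩ ⟨w, hw⟩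
    refine ⟨w + v, fun x => ?_⟩
    show g (h x) = x + (w + v)
    rw [hw x, hv (x + w), add_assoc]
  inv_mem' := by
    rintro g ⟨v, hv⟩
    refine ⟨-v, fun x => ?_⟩
    apply g.injective
    rw [IsometryEquiv.apply_inv_self, hv]
    abel
  
/-- A crystallographic group of rank `n` is a discrete (equivalently, acting properly
discontinuously) cocompact subgroup of the isometry group of `ℝⁿ`. -/
def IsCrystallographic {n : ℕ} (Γ : Subgroup (IsoRn n)) : Prop :=
  (∀ K L : Set (Eucl n), IsCompact K → IsCompact L →
      {γ : Γ | ((γ : IsoRn n) '' K ∩ L).Nonempty}.Finite) ∧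
  ∃ K : Set (Eucl n), IsCompact K ∧ (⋃ γ : Γ, (γ : IsoRn n) '' K) = Set.univ

/-- A group is virtually cyclic if it has a cyclic subgroup of finite index. -/
def VirtuallyCyclic (G : Type*) [Group G] : Prop :=
  ∃ K : Subgroup G, IsCyclic K ∧ K.FiniteIndex

/-- `C` is a maximal cyclic subgroup of `A`: a cyclic subgroup of `A` not properly contained
in any cyclic subgroup of `A`. -/
def IsMaxCyclic {n : ℕ} (A C : Subgroup (IsoRn n)) : Prop :=
  C ≤ A ∧ (∃ c, C = Subgroup.zpowers c) ∧
    ∀ D : Subgroup (IsoRn n), D ≤ A → (∃ d, D = Subgroup.zpowers d) → C ≤ D → C = D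
/-- The line through `x` in the direction of `v` (the `C`-invariant line containing `x`,
when `C` is generated by the translation by `v`). -/
def lineThrough {n : ℕ} (v x : Eucl n) : Set (Eucl n) := {p | ∃ t : ℝ, p = x + t • v}

/-! An element of `N_Γ(C)` acting trivially on `ℝ^{n-1}(C)` moves every point along `v`, and
an isometry doing so is either a translation along `v` or the reflection in `v⊥` followed by
such a translation. The translations of `Γ` along `v` form a discrete, hence cyclic, group
containing `C`, so by maximality of `C` they are exactly `C`. Two elements of the reflecting
kind differ by a translation along `v`, so they span at most one further coset of `C`. -/

theorem forall_eq_or_forall_eq_of_forall_eq_or_eq {α β γ : Type*} {f : α → β} {g : α → γ}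
    (h : ∀ x y, f x = f y ∨ g x = g y) : (∀ x y, f x = f y) ∨ ∀ x y, g x = g y := by
  by_contra! hne
  obtain ⟨⟨a, b, hab⟩, ⟨c, d, hcd⟩⟩ := hne
  have := h a c; have := h a d; have := h b c; have := h b d; have := h c d
  grind

section LineSymmetries

variable {E : Type*} [NormedAddCommGroup E] [InnerProductSpace ℝ E]

theorem reflection_eq_add_of_norm_add_eq {v w u : E} (hu : u ∈ ℝ ∙ v) (h : ‖w + u‖ = ‖w‖) :
    u = 0 ∨ (ℝ ∙ v)ᗮ.reflection w = w + u := by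
  obtain ⟨s, rfl⟩ := Submodule.mem_span_singleton.mp hu
  by_cases hs : s • v = 0
  · exact Or.inl hs
  right
  have hρ := Submodule.reflection_sub h
  simp only [add_sub_cancel_left,
    Submodule.span_singleton_smul_eq (left_ne_zero_of_smul hs).isUnit] at hρ
  rw [← Submodule.reflection_reflection (ℝ ∙ v)ᗮ (w + s • v), hρ]

theorem reflection_mem_span_singleton {v u : E} (hu : u ∈ ℝ ∙ v) :
    (ℝ ∙ v)ᗮ.reflection u ∈ ℝ ∙ v := by
  rw [Submodule.reflection_mem_subspace_orthogonal_precomplement_eq_neg hu]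
  exact neg_mem hu

theorem Isometry.eq_add_or_eq_reflection_add {f : E → E} (hf : Isometry f) {v : E}
    (hline : ∀ x, f x - x ∈ ℝ ∙ v) :
    (∀ x, f x = x + f 0) ∨ ∀ x, f x = (ℝ ∙ v)ᗮ.reflection x + f 0 := by
  set ρ := (ℝ ∙ v)ᗮ.reflection
  have key : ∀ x y, f x - x = f y - y ∨ f x - ρ x = f y - ρ y := by
    intro x y
    have hn : ‖(x - y) + ((f x - x) - (f y - y))‖ = ‖x - y‖ := by
      rw [show (x - y) + ((f x - x) - (f y - y)) = f x - f y by abel, ← dist_eq_norm,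
        ← dist_eq_norm, hf.dist_eq]
    rcases reflection_eq_add_of_norm_add_eq (sub_mem (hline x) (hline y)) hn with h | h
    · exact Or.inl (sub_eq_zero.mp h)
    · right
      rw [sub_eq_sub_iff_sub_eq_sub, ← map_sub, h]
      abel
  rcases forall_eq_or_forall_eq_of_forall_eq_or_eq key with h | h
  · exact Or.inl fun x => sub_eq_iff_eq_add'.mp (by simpa using h x 0)
  · exact Or.inr fun x => sub_eq_iff_eq_add'.mp (by simpa using h x 0)

end LineSymmetries

open Topology in
theorem AddSubgroup.exists_eq_zmultiples_of_finite_inter {S : AddSubgroup ℝ} {U : Set ℝ}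
    (hU : U ∈ 𝓝 0) (hfin : ((S : Set ℝ) ∩ U).Finite) : ∃ a, S = AddSubgroup.zmultiples a := by
  have : DiscreteTopology S := by
    rw [discreteTopology_iff_isOpen_singleton_zero, isOpen_induced_iff]
    refine ⟨interior U \ ((S ∩ U) \ {0}), isOpen_interior.sdiff (hfin.sdiff).isClosed, ?_⟩
    ext ⟨x, hx⟩
    have h0 : (0 : ℝ) ∈ interior U := mem_interior_iff_mem_nhds.mpr hU
    simp only [Set.mem_preimage, Set.mem_sdiff, Set.mem_inter_iff, SetLike.mem_coe,
      Set.mem_singleton_iff, AddSubgroup.mk_eq_zero]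
    constructor
    · rintro ⟨hxU, hx0⟩
      by_contra hne
      exact hx0 ⟨⟨hx, interior_subset hxU⟩, hne⟩
    · rintro rfl
      exact ⟨h0, fun h => h.2 rfl⟩
  obtain ⟨a, ha⟩ := (AddSubgroup.isAddCyclic_iff_exists_zmultiples_eq_top S).mp
    (AddSubgroup.discrete_iff_addCyclic.mpr this)
  exact ⟨a, ha.symm⟩

namespace IsTranslationBy

variable {n : ℕ} {g h : IsoRn n} {v w : Eucl n}

theorem eq (hv : IsTranslationBy g v) (hw : IsTranslationBy h v) : g = h :=
  IsometryEquiv.ext fun x => (hv x).trans (hw x).symm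

theorem one : IsTranslationBy (1 : IsoRn n) 0 := fun x => by simp

theorem mul (hv : IsTranslationBy g v) (hw : IsTranslationBy h w) :
    IsTranslationBy (g * h) (v + w) := fun x => by
  rw [IsometryEquiv.mul_apply, hw, hv, add_assoc, add_comm w]

theorem inv (hv : IsTranslationBy g v) : IsTranslationBy g⁻¹ (-v) := fun x => by
  apply g.injective
  rw [IsometryEquiv.apply_inv_self, hv]
  abel

theorem zpow (hv : IsTranslationBy g v) (k : ℤ) : IsTranslationBy (g ^ k) (k • v) := by
  induction k using Int.induction_on with
  | zero => simpa using one
  | succ i ih => simpa [zpow_add_one, add_smul] using ih.mul hv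
  | pred i ih =>
    rw [zpow_sub_one, sub_smul, one_smul, sub_eq_add_neg]
    exact ih.mul hv.inv

end IsTranslationBy

theorem mem_lineThrough_iff {n : ℕ} {v x p : Eucl n} : p ∈ lineThrough v x ↔ p - x ∈ ℝ ∙ v := by
  simp only [lineThrough, Set.mem_ofPred_eq, Submodule.mem_span_singleton, eq_sub_iff_add_eq',
    eq_comm]

def translationCoeffs {n : ℕ} (Γ : Subgroup (IsoRn n)) (v : Eucl n) : AddSubgroup ℝ where
  carrier := {t | ∃ g ∈ Γ, IsTranslationBy g (t • v)}
  zero_mem' := ⟨1, Γ.one_mem, by simpa using IsTranslationBy.one⟩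
  add_mem' := by
    rintro s t ⟨g, hg, hgs⟩ ⟨h, hh, hht⟩
    exact ⟨g * h, Γ.mul_mem hg hh, by simpa [add_smul] using hgs.mul hht⟩
  neg_mem' := by
    rintro t ⟨g, hg, hgt⟩
    exact ⟨g⁻¹, Γ.inv_mem hg, by simpa [neg_smul] using hgt.inv⟩

theorem IsTranslationBy.inv_mul_of_eq_add {n : ℕ} {a b : IsoRn n} {L : Eucl n ≃ₗᵢ[ℝ] Eucl n}
    (ha : ∀ x, a x = L x + a 0) (hb : ∀ x, b x = L x + b 0) :
    IsTranslationBy (a⁻¹ * b) (L.symm (b 0 - a 0)) := fun x => by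
  apply a.injective
  rw [IsometryEquiv.mul_apply, IsometryEquiv.apply_inv_self, ha, hb, map_add,
    LinearIsometryEquiv.apply_symm_apply]
  abel

section Crystallographic

variable {n : ℕ} {Γ : Subgroup (IsoRn n)} {v : Eucl n}

theorem finite_translationCoeffs_inter_Icc
    (hdisc : ∀ K L : Set (Eucl n), IsCompact K → IsCompact L →
      {γ : Γ | ((γ : IsoRn n) '' K ∩ L).Nonempty}.Finite) (hv : v ≠ 0) :
    ((translationCoeffs Γ v : Set ℝ) ∩ Set.Icc (-1) 1).Finite := by
  set B := Metric.closedBall (0 : Eucl n) ‖v‖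
  have hB : IsCompact B := isCompact_closedBall _ _
  refine (((hdisc B B hB hB).image fun γ : Γ => (γ : IsoRn n) 0).preimage
    (smul_left_injective ℝ hv).injOn).subset ?_
  rintro t ⟨⟨g, hg, hgt⟩, ht⟩
  have hg0 : g 0 = t • v := by rw [hgt, zero_add]
  have htv : t • v ∈ B := by
    simpa [B, norm_smul] using mul_le_of_le_one_left (norm_nonneg v) (abs_le.mpr ht)
  exact ⟨⟨g, hg⟩, ⟨t • v, ⟨0, by simp [B], hg0⟩, htv⟩, hg0⟩

theorem mem_zpowers_of_isTranslationBy
    (hdisc : ∀ K L : Set (Eucl n), IsCompact K → IsCompact L →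
      {γ : Γ | ((γ : IsoRn n) '' K ∩ L).Nonempty}.Finite) (hv : v ≠ 0)
    {c : IsoRn n} (hc : IsTranslationBy c v)
    (hC : IsMaxCyclic (Γ ⊓ Translations n) (Subgroup.zpowers c))
    ⦃g : IsoRn n⦄ (hg : g ∈ Γ) ⦃w : Eucl n⦄ (hgw : IsTranslationBy g w) (hw : w ∈ ℝ ∙ v) :
    g ∈ Subgroup.zpowers c := by
  obtain ⟨a, ha⟩ := AddSubgroup.exists_eq_zmultiples_of_finite_inter
    (Icc_mem_nhds (by norm_num) (by norm_num)) (finite_translationCoeffs_inter_Icc hdisc hv)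
  have mem_iff : ∀ t, t ∈ translationCoeffs Γ v ↔ ∃ k : ℤ, k • a = t := fun t => by
    rw [ha, AddSubgroup.mem_zmultiples_iff]
  obtain ⟨d, hdΓ, hd⟩ : a ∈ translationCoeffs Γ v := (mem_iff a).mpr ⟨1, one_smul ℤ a⟩
  have power_of_d : ∀ {h : IsoRn n} {t : ℝ}, h ∈ Γ → IsTranslationBy h (t • v) →
      ∃ k : ℤ, d ^ k = h := by
    intro h t hh hht
    obtain ⟨k, hk⟩ := (mem_iff t).mp ⟨h, hh, hht⟩
    exact ⟨k, (hd.zpow k).eq (by rwa [← smul_assoc, hk])⟩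
  have hcd : Subgroup.zpowers c = Subgroup.zpowers d :=
    hC.2.2 _ (Subgroup.zpowers_le.mpr ⟨hdΓ, a • v, hd⟩) ⟨d, rfl⟩
      (Subgroup.zpowers_le.mpr (power_of_d (hC.1 (Subgroup.mem_zpowers c)).1 (by rwa [one_smul])))
  obtain ⟨t, rfl⟩ := Submodule.mem_span_singleton.mp hw
  rw [hcd]
  exact power_of_d hg hgw

end Crystallographic

/-- The kernel of `j_C` has at most two elements: the elements of `N_Γ(C)` preserving every
`C`-invariant line lie in the union of two cosets of `C`. -/
theorem kernel_of_induced_action_le_two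
    (n : ℕ) (Γ : Subgroup (IsoRn n)) (hΓ : IsCrystallographic Γ)
    (c : IsoRn n) (v : Eucl n) (hv : v ≠ 0) (hc : IsTranslationBy c v)
    (hC : IsMaxCyclic (Γ ⊓ Translations n) (Subgroup.zpowers c)) :
    ∃ a b : IsoRn n,
      ∀ γ ∈ Γ ⊓ Subgroup.normalizer (Subgroup.zpowers c : Set (IsoRn n)),
        (∀ x : Eucl n, γ x ∈ lineThrough v x) →
          (∃ g ∈ Subgroup.zpowers c, γ = a * g) ∨ (∃ g ∈ Subgroup.zpowers c, γ = b * g) := by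
  set ρ := (ℝ ∙ v)ᗮ.reflection
  have mem_C := mem_zpowers_of_isTranslationBy hΓ.1 hv hc hC
  have kernel_cases : ∀ γ : IsoRn n, (∀ x, γ x ∈ lineThrough v x) →
      γ 0 ∈ ℝ ∙ v ∧ ((∀ x, γ x = x + γ 0) ∨ ∀ x, γ x = ρ x + γ 0) := fun γ hline =>
    have along_v := fun x => mem_lineThrough_iff.mp (hline x)
    ⟨by simpa using along_v 0, γ.isometry.eq_add_or_eq_reflection_add along_v⟩
  by_cases hrefl : ∃ b ∈ Γ, b 0 ∈ ℝ ∙ v ∧ ∀ x, b x = ρ x + b 0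
  · obtain ⟨b, hbΓ, hb0, hb⟩ := hrefl
    refine ⟨1, b, fun γ hγ hline => ?_⟩
    obtain ⟨hγ0, htr | hγρ⟩ := kernel_cases γ hline
    · exact Or.inl ⟨γ, mem_C hγ.1 htr hγ0, (one_mul γ).symm⟩
    · refine Or.inr ⟨b⁻¹ * γ, mem_C (Γ.mul_mem (Γ.inv_mem hbΓ) hγ.1)
        (IsTranslationBy.inv_mul_of_eq_add hb hγρ) ?_, (mul_inv_cancel_left b γ).symm⟩
      exact reflection_mem_span_singleton (sub_mem hγ0 hb0)
  · refine ⟨1, 1, fun γ hγ hline => Or.inl ⟨γ, ?_, (one_mul γ).symm⟩⟩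
    obtain ⟨hγ0, htr | hγρ⟩ := kernel_cases γ hline
    · exact mem_C hγ.1 htr hγ0
    · exact absurd ⟨γ, hγ.1, hγ0, hγρ⟩ hrefl
end
end

section
/- Let Γ be a crystallographic group of rank n with translation subgroup A, let C be a maximal cyclic subgroup of A, and let j_C : N_Γ(C)/C → Iso(ℝ^{n-1}(C)) be the induced action on the space of C-invariant lines. Then the image of j_C is a crystallographic group of rank n−1. -/
noncomputable section

/-! Orthogonal projection `φ` along `v` identifies the Hausdorff metric on lines parallel to `v`
with the metric of `ℝ^{n-1}`, and the linear part of an isometry normalizing `⟨c⟩` maps `v` to a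
nonzero multiple of `v`, so it permutes these lines isometrically and induces an isometry of
`ℝ^{n-1}`.

Discreteness: a representative of an element of the image can be corrected by a power of `c`,
which does not change the induced isometry, until it moves a lift of one compact set into a
`‖v‖`-thickening of a lift of another; by discreteness of `Γ` there are finitely many such elements.

Cocompactness: the conjugates `γ⁻¹ c γ` (`γ ∈ Γ`) are elements of `Γ` moving `0` by `‖v‖`, so there
are finitely many of them and the centralizer of `c` has finite index in `Γ`. Projecting the
translates of a compact fundamental set of `Γ` by finitely many coset representatives gives a
compact set whose translates under the image cover `ℝ^{n-1}`. -/

open Submodule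

section LineQuotient

variable {n : ℕ} {v : Eucl n}

theorem finrank_orthogonal_span_singleton_eq_sub_one (hv : v ≠ 0) :
    Module.finrank ℝ (ℝ ∙ v)ᗮ = n - 1 := by
  have h := (ℝ ∙ v).finrank_add_finrank_orthogonal
  rw [finrank_span_singleton hv, finrank_euclideanSpace_fin] at h
  omega

def orthogonalSpanSingletonEquiv (hv : v ≠ 0) : (ℝ ∙ v)ᗮ ≃ₗᵢ[ℝ] Eucl (n - 1) :=
  ((stdOrthonormalBasis ℝ (ℝ ∙ v)ᗮ).reindex
    (finCongr (finrank_orthogonal_span_singleton_eq_sub_one hv))).repr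

/-- The quotient map `ℝⁿ → ℝⁿ/ℝv`, realised as the orthogonal projection onto `vᗮ ≅ ℝ^{n-1}`. -/
def lineQuotient (hv : v ≠ 0) : Eucl n →ₗ[ℝ] Eucl (n - 1) :=
  (orthogonalSpanSingletonEquiv hv).toLinearEquiv.toLinearMap ∘ₗ
    (ℝ ∙ v)ᗮ.orthogonalProjectionOnto.toLinearMap

def lineSection (hv : v ≠ 0) : Eucl (n - 1) →ₗᵢ[ℝ] Eucl n :=
  (ℝ ∙ v)ᗮ.subtypeₗᵢ.comp (orthogonalSpanSingletonEquiv hv).symm.toLinearIsometry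

variable (hv : v ≠ 0)

@[simp]
theorem lineQuotient_lineSection (z : Eucl (n - 1)) : lineQuotient hv (lineSection hv z) = z := by
  simp [lineQuotient, lineSection, orthogonalProjectionOnto_mem_subspace_eq_self]

theorem lineQuotient_surjective : Function.Surjective (lineQuotient hv) :=
  fun z => ⟨lineSection hv z, lineQuotient_lineSection hv z⟩

theorem ker_lineQuotient : LinearMap.ker (lineQuotient hv) = ℝ ∙ v := by
  ext x
  simp [lineQuotient, orthogonal_orthogonal]

theorem norm_lineQuotient_le (x : Eucl n) : ‖lineQuotient hv x‖ ≤ ‖x‖ := by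
  simpa [lineQuotient] using norm_orthogonalProjectionOnto_apply_le (K := (ℝ ∙ v)ᗮ) x

theorem lineQuotient_add_smul (x : Eucl n) (t : ℝ) :
    lineQuotient hv (x + t • v) = lineQuotient hv x := by
  have : t • v ∈ LinearMap.ker (lineQuotient hv) := by
    rw [ker_lineQuotient]; exact smul_mem _ t (mem_span_singleton_self v)
  rw [map_add, LinearMap.mem_ker.mp this, add_zero]

theorem exists_eq_lineSection_add_smul (x : Eucl n) :
    ∃ t : ℝ, x = lineSection hv (lineQuotient hv x) + t • v := by
  have hk : x - lineSection hv (lineQuotient hv x) ∈ LinearMap.ker (lineQuotient hv) := by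
    rw [LinearMap.mem_ker, map_sub, lineQuotient_lineSection, sub_self]
  obtain ⟨t, ht⟩ := mem_span_singleton.mp (ker_lineQuotient hv ▸ hk)
  exact ⟨t, by rw [ht, add_sub_cancel]⟩


theorem edist_lineQuotient_le (x y : Eucl n) :
    edist (lineQuotient hv x) (lineQuotient hv y) ≤ edist x y := by
  simpa only [edist_dist, dist_eq_norm, ← map_sub] using
    ENNReal.ofReal_le_ofReal (norm_lineQuotient_le hv (x - y))

theorem exists_mem_lineThrough_edist_le {a x : Eucl n} (b : Eucl n) (hx : x ∈ lineThrough v a) :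
    ∃ y ∈ lineThrough v b, edist x y ≤ edist (lineQuotient hv a) (lineQuotient hv b) := by
  obtain ⟨t, rfl⟩ := hx
  obtain ⟨s, hs⟩ := exists_eq_lineSection_add_smul hv (a - b)
  refine ⟨b + (t + s) • v, ⟨t + s, rfl⟩, le_of_eq ?_⟩
  have : a + t • v - (b + (t + s) • v) = lineSection hv (lineQuotient hv (a - b)) := by
    rw [eq_sub_of_add_eq hs.symm]; module
  rw [edist_eq_enorm_sub, this, (lineSection hv).enorm_map, map_sub, edist_eq_enorm_sub]

theorem hausdorffEDist_lineThrough (a b : Eucl n) :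
    Metric.hausdorffEDist (lineThrough v a) (lineThrough v b) =
      edist (lineQuotient hv a) (lineQuotient hv b) := by
  refine le_antisymm (Metric.hausdorffEDist_le_of_mem_edist
    (fun x hx => exists_mem_lineThrough_edist_le hv b hx)
    (fun x hx => by
      rw [edist_comm (lineQuotient hv a)]; exact exists_mem_lineThrough_edist_le hv a hx)) ?_
  have ha : a ∈ lineThrough v a := ⟨0, by simp⟩
  refine le_trans ?_ (Metric.infEDist_le_hausdorffEDist_of_mem ha)
  refine Metric.le_infEDist.mpr fun y ⟨t, hy⟩ => ?_
  rw [hy, ← lineQuotient_add_smul hv b t]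
  exact edist_lineQuotient_le hv a _

end LineQuotient

theorem IsometryEquiv.map_add_eq_add_toRealLinearIsometryEquiv {E F : Type*}
    [NormedAddCommGroup E] [NormedSpace ℝ E] [NormedAddCommGroup F] [NormedSpace ℝ F]
    (h : E ≃ᵢ F) (x w : E) : h (x + w) = h x + h.toRealLinearIsometryEquiv w := by
  have := h.toRealLinearIsometryEquiv.map_add x w
  simp only [IsometryEquiv.toRealLinearIsometryEquiv_apply] at this ⊢
  rw [sub_eq_iff_eq_add.mp this]
  abel

section Isometries

variable {n : ℕ} {c h : IsoRn n} {v : Eucl n}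

theorem IsTranslationBy.eq_s7 {w : Eucl n} (hc : IsTranslationBy c v) (hw : IsTranslationBy c w) :
    v = w :=
  add_left_cancel ((hc 0).symm.trans (hw 0))

theorem IsTranslationBy.zpow_s7 (hc : IsTranslationBy c v) (m : ℤ) :
    IsTranslationBy (c ^ m) (m • v) := by
  induction m using Int.induction_on with
  | zero => intro x; simp
  | succ k ih =>
    intro x
    rw [zpow_add_one, IsometryEquiv.mul_apply, hc, ih, add_smul, one_smul]
    abel
  | pred k ih =>
    intro x
    have hcinv : c⁻¹ x = x - v :=
      c.injective (by rw [IsometryEquiv.apply_inv_self, hc, sub_add_cancel])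
    rw [zpow_sub_one, IsometryEquiv.mul_apply, hcinv, ih, sub_smul, one_smul]
    abel

theorem IsTranslationBy.conj (hc : IsTranslationBy c v) (h : IsoRn n) :
    IsTranslationBy (h * c * h⁻¹) (h.toRealLinearIsometryEquiv v) := fun x => by
  rw [IsometryEquiv.mul_apply, IsometryEquiv.mul_apply, hc,
    IsometryEquiv.map_add_eq_add_toRealLinearIsometryEquiv, IsometryEquiv.apply_inv_self]

theorem IsTranslationBy.exists_toRealLinearIsometryEquiv_eq_zsmul (hc : IsTranslationBy c v)
    (hh : h ∈ Subgroup.normalizer (Subgroup.zpowers c : Set (IsoRn n))) :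
    ∃ m : ℤ, h.toRealLinearIsometryEquiv v = m • v := by
  obtain ⟨m, hm : c ^ m = h * c * h⁻¹⟩ :=
    (Subgroup.mem_normalizer_iff.mp hh c).mp (Subgroup.mem_zpowers c)
  exact ⟨m, (hc.conj h).eq_s7 (hm ▸ hc.zpow_s7 m)⟩

theorem image_lineThrough (h : IsoRn n) (x : Eucl n) :
    h '' lineThrough v x = lineThrough (h.toRealLinearIsometryEquiv v) (h x) := by
  ext p
  simp only [lineThrough, Set.mem_image, Set.mem_ofPred_eq]
  constructor
  · rintro ⟨q, ⟨t, rfl⟩, rfl⟩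
    exact ⟨t, by rw [IsometryEquiv.map_add_eq_add_toRealLinearIsometryEquiv, map_smul]⟩
  · rintro ⟨t, rfl⟩
    exact ⟨x + t • v, ⟨t, rfl⟩,
      by rw [IsometryEquiv.map_add_eq_add_toRealLinearIsometryEquiv, map_smul]⟩

theorem lineThrough_smul {s : ℝ} (hs : s ≠ 0) (x : Eucl n) :
    lineThrough (s • v) x = lineThrough v x := by
  ext p
  simp only [lineThrough, Set.mem_ofPred_eq, smul_smul]
  exact ⟨fun ⟨t, ht⟩ => ⟨t * s, ht⟩, fun ⟨t, ht⟩ => ⟨t / s, by rwa [div_mul_cancel₀ t hs]⟩⟩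

end Isometries

section InducedIsometry

variable {n : ℕ} {c h : IsoRn n} {v : Eucl n}

theorem image_lineThrough_of_mem_normalizer (hv : v ≠ 0) (hc : IsTranslationBy c v)
    (hh : h ∈ Subgroup.normalizer (Subgroup.zpowers c : Set (IsoRn n))) (x : Eucl n) :
    h '' lineThrough v x = lineThrough v (h x) := by
  obtain ⟨m, hm⟩ := hc.exists_toRealLinearIsometryEquiv_eq_zsmul hh
  rw [← Int.cast_smul_eq_zsmul ℝ] at hm
  have hm0 : (m : ℝ) ≠ 0 := by
    rintro hm0
    rw [hm0, zero_smul, LinearIsometryEquiv.map_eq_zero_iff] at hm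
    exact hv hm
  rw [image_lineThrough, hm, lineThrough_smul hm0]

theorem lineQuotient_apply_lineSection_lineQuotient (hv : v ≠ 0) (hc : IsTranslationBy c v)
    (hh : h ∈ Subgroup.normalizer (Subgroup.zpowers c : Set (IsoRn n))) (x : Eucl n) :
    lineQuotient hv (h (lineSection hv (lineQuotient hv x))) = lineQuotient hv (h x) := by
  obtain ⟨m, hm⟩ := hc.exists_toRealLinearIsometryEquiv_eq_zsmul hh
  obtain ⟨t, ht⟩ := exists_eq_lineSection_add_smul hv x
  conv_rhs => rw [ht, IsometryEquiv.map_add_eq_add_toRealLinearIsometryEquiv, map_smul, hm,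
    ← Int.cast_smul_eq_zsmul ℝ, smul_smul, lineQuotient_add_smul]

theorem isometry_lineQuotient_comp_lineSection (hv : v ≠ 0) (hc : IsTranslationBy c v)
    (hh : h ∈ Subgroup.normalizer (Subgroup.zpowers c : Set (IsoRn n))) :
    Isometry fun z => lineQuotient hv (h (lineSection hv z)) := fun z₁ z₂ =>
  calc edist (lineQuotient hv (h (lineSection hv z₁))) (lineQuotient hv (h (lineSection hv z₂)))
      = Metric.hausdorffEDist (h '' lineThrough v (lineSection hv z₁))
          (h '' lineThrough v (lineSection hv z₂)) := by
        simp only [image_lineThrough_of_mem_normalizer hv hc hh, hausdorffEDist_lineThrough hv]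
    _ = Metric.hausdorffEDist (lineThrough v (lineSection hv z₁))
          (lineThrough v (lineSection hv z₂)) := Metric.hausdorffEDist_image h.isometry
    _ = edist z₁ z₂ := by
        rw [hausdorffEDist_lineThrough hv, lineQuotient_lineSection, lineQuotient_lineSection]

/-- `j_C` applied to the class of `h`. -/
def inducedIsometry (hv : v ≠ 0) (hc : IsTranslationBy c v)
    (hh : h ∈ Subgroup.normalizer (Subgroup.zpowers c : Set (IsoRn n))) : IsoRn (n - 1) :=
  IsometryEquiv.mk' (fun z => lineQuotient hv (h (lineSection hv z)))
    (fun z => lineQuotient hv (h⁻¹ (lineSection hv z)))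
    (fun z => by
      rw [lineQuotient_apply_lineSection_lineQuotient hv hc hh, IsometryEquiv.apply_inv_self,
        lineQuotient_lineSection])
    (isometry_lineQuotient_comp_lineSection hv hc hh)

theorem inducedIsometry_lineQuotient (hv : v ≠ 0) (hc : IsTranslationBy c v)
    (hh : h ∈ Subgroup.normalizer (Subgroup.zpowers c : Set (IsoRn n))) (x : Eucl n) :
    inducedIsometry hv hc hh (lineQuotient hv x) = lineQuotient hv (h x) :=
  lineQuotient_apply_lineSection_lineQuotient hv hc hh x

end InducedIsometry

theorem exists_finite_forall_exists_apply_eq {α β : Type*} {f : α → β} (hf : (Set.range f).Finite) :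
    ∃ F : Set α, F.Finite ∧ ∀ a, ∃ a₀ ∈ F, f a₀ = f a := by
  obtain ⟨F, -, hF⟩ := Set.exists_subset_bijOn Set.univ f
  rw [Set.image_univ] at hF
  exact ⟨F, Set.Finite.of_finite_image (hF.image_eq ▸ hf) hF.injOn,
    fun a => hF.surjOn (Set.mem_range_self a)⟩

theorem Subgroup.mul_inv_mem_normalizer_zpowers_of_conj_eq {G : Type*} [Group G] {a b c : G}
    (h : a⁻¹ * c * a = b⁻¹ * c * b) : b * a⁻¹ ∈ normalizer (zpowers c : Set G) := by
  have hconj : b * a⁻¹ * c * (b * a⁻¹)⁻¹ = c := by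
    calc b * a⁻¹ * c * (b * a⁻¹)⁻¹ = b * (a⁻¹ * c * a) * b⁻¹ := by group
      _ = c := by rw [h]; group
  rw [mem_normalizer_iff_map_conj_eq, MonoidHom.map_zpowers]
  exact congrArg zpowers hconj

def IsProperlyDiscontinuous {n : ℕ} (Γ : Subgroup (IsoRn n)) : Prop :=
  ∀ K L : Set (Eucl n), IsCompact K → IsCompact L →
    {γ : Γ | ((γ : IsoRn n) '' K ∩ L).Nonempty}.Finite

def IsCocompact {n : ℕ} (Γ : Subgroup (IsoRn n)) : Prop :=
  ∃ K : Set (Eucl n), IsCompact K ∧ (⋃ γ : Γ, (γ : IsoRn n) '' K) = Set.univ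

section InducedImage

variable {n : ℕ} {c : IsoRn n} {v : Eucl n} {Γ : Subgroup (IsoRn n)}

/-- The image of `j_C : N_Γ(C)/C → Iso(ℝ^{n-1})`. -/
def inducedImage (hv : v ≠ 0) (Γ : Subgroup (IsoRn n)) (c : IsoRn n) :
    Subgroup (IsoRn (n - 1)) where
  carrier := {δ | ∃ γ ∈ Γ ⊓ Subgroup.normalizer (Subgroup.zpowers c : Set (IsoRn n)),
    ∀ x, δ (lineQuotient hv x) = lineQuotient hv (γ x)}
  one_mem' := ⟨1, one_mem _, fun _ => rfl⟩
  mul_mem' := by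
    rintro δ₁ δ₂ ⟨γ₁, hγ₁, h₁⟩ ⟨γ₂, hγ₂, h₂⟩
    exact ⟨γ₁ * γ₂, mul_mem hγ₁ hγ₂, fun x => by simp only [IsometryEquiv.mul_apply, h₁, h₂]⟩
  inv_mem' := by
    rintro δ ⟨γ, hγ, hδ⟩
    refine ⟨γ⁻¹, inv_mem hγ, fun x => δ.injective ?_⟩
    rw [IsometryEquiv.apply_inv_self, hδ, IsometryEquiv.apply_inv_self]

theorem lineQuotient_zpow_apply (hv : v ≠ 0) (hc : IsTranslationBy c v) (k : ℤ) (x : Eucl n) :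
    lineQuotient hv ((c ^ k) x) = lineQuotient hv x := by
  rw [hc.zpow_s7 k x, ← Int.cast_smul_eq_zsmul ℝ, lineQuotient_add_smul]

theorem exists_dist_zpow_apply_lineSection_le (hv : v ≠ 0) (hc : IsTranslationBy c v) (y : Eucl n) :
    ∃ k : ℤ, dist ((c ^ k) y) (lineSection hv (lineQuotient hv y)) ≤ ‖v‖ := by
  obtain ⟨t, ht⟩ := exists_eq_lineSection_add_smul hv y
  refine ⟨-⌊t⌋, ?_⟩
  have : (c ^ (-⌊t⌋)) y - lineSection hv (lineQuotient hv y) = Int.fract t • v := by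
    rw [hc.zpow_s7, ← Int.cast_smul_eq_zsmul ℝ, Int.fract]
    nth_rewrite 1 [ht]
    push_cast
    module
  rw [dist_eq_norm, this, norm_smul, Real.norm_of_nonneg (Int.fract_nonneg t)]
  exact mul_le_of_le_one_left (norm_nonneg v) (Int.fract_lt_one t).le

theorem isProperlyDiscontinuous_inducedImage (hv : v ≠ 0) (hc : IsTranslationBy c v) (hcΓ : c ∈ Γ)
    (hΓ : IsProperlyDiscontinuous Γ) : IsProperlyDiscontinuous (inducedImage hv Γ c) := by
  intro K L hK hL
  let S := {γ : Γ | ((γ : IsoRn n) '' (lineSection hv '' K) ∩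
    Metric.cthickening ‖v‖ (lineSection hv '' L)).Nonempty}
  have hS : S.Finite := hΓ _ _ (hK.image (lineSection hv).continuous)
    (hL.image (lineSection hv).continuous).cthickening
  refine Set.Finite.of_finite_image (f := fun δ => ⇑(δ : IsoRn (n - 1)))
    ((hS.image fun (γ : Γ) z => lineQuotient hv ((γ : IsoRn n) (lineSection hv z))).subset ?_)
    (fun δ₁ _ δ₂ _ h => Subtype.ext (DFunLike.coe_injective h))
  rintro _ ⟨δ, ⟨_, ⟨z, hzK, rfl⟩, hzL⟩, rfl⟩
  obtain ⟨γ, hγ, hδ⟩ := δ.2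
  obtain ⟨k, hk⟩ := exists_dist_zpow_apply_lineSection_le hv hc (γ (lineSection hv z))
  have hδ' : ∀ x, (δ : IsoRn (n - 1)) (lineQuotient hv x) = lineQuotient hv ((c ^ k * γ) x) :=
    fun x => by rw [IsometryEquiv.mul_apply, lineQuotient_zpow_apply hv hc, hδ]
  refine ⟨⟨c ^ k * γ, mul_mem (zpow_mem hcΓ k) (Subgroup.mem_inf.mp hγ).1⟩,
    ⟨_, ⟨_, ⟨z, hzK, rfl⟩, rfl⟩, ?_⟩, ?_⟩
  · refine Metric.mem_cthickening_of_dist_le _ _ _ _ ⟨_, hzL, ?_⟩ hk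
    rw [← hδ, lineQuotient_lineSection]
  · funext z'
    show lineQuotient hv ((c ^ k * γ) (lineSection hv z')) = (δ : IsoRn (n - 1)) z'
    rw [← hδ', lineQuotient_lineSection]

theorem IsProperlyDiscontinuous.finite_range_conj (hΓ : IsProperlyDiscontinuous Γ)
    (hc : IsTranslationBy c v) (hcΓ : c ∈ Γ) :
    (Set.range fun γ : Γ => γ⁻¹ * ⟨c, hcΓ⟩ * γ).Finite := by
  refine (hΓ {0} (Metric.closedBall 0 ‖v‖) isCompact_singleton (isCompact_closedBall _ _)).subset ?_
  rintro _ ⟨γ, rfl⟩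
  refine ⟨_, ⟨0, rfl, rfl⟩, Metric.mem_closedBall.mpr (le_of_eq ?_)⟩
  calc dist ((γ : IsoRn n)⁻¹ (c ((γ : IsoRn n) 0))) 0
      = dist ((γ : IsoRn n)⁻¹ (c ((γ : IsoRn n) 0))) ((γ : IsoRn n)⁻¹ ((γ : IsoRn n) 0)) := by
        rw [IsometryEquiv.inv_apply_self]
    _ = ‖v‖ := by rw [IsometryEquiv.dist_eq, hc, dist_self_add_left]

theorem isCocompact_inducedImage (hv : v ≠ 0) (hc : IsTranslationBy c v) (hcΓ : c ∈ Γ)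
    (hΓd : IsProperlyDiscontinuous Γ) (hΓ : IsCocompact Γ) : IsCocompact (inducedImage hv Γ c) := by
  obtain ⟨K, hK, hcov⟩ := hΓ
  obtain ⟨F, hF, hFconj⟩ := exists_finite_forall_exists_apply_eq (hΓd.finite_range_conj hc hcΓ)
  refine ⟨lineQuotient hv '' ⋃ γ₀ ∈ F, (γ₀ : IsoRn n) '' K,
    ((hF.isCompact_biUnion fun γ₀ _ => hK.image γ₀.1.continuous).image
      (lineQuotient hv).continuous_of_finiteDimensional),
    Set.eq_univ_of_forall fun z => ?_⟩
  obtain ⟨_, ⟨γ, rfl⟩, y, hyK, hy⟩ := hcov.symm ▸ Set.mem_univ (lineSection hv z)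
  obtain ⟨γ₀, hγ₀F, hconj⟩ := hFconj γ
  have hN : (γ : IsoRn n) * (γ₀ : IsoRn n)⁻¹ ∈
      Subgroup.normalizer (Subgroup.zpowers c : Set (IsoRn n)) :=
    Subgroup.mul_inv_mem_normalizer_zpowers_of_conj_eq (by simpa using congrArg Subtype.val hconj)
  have hmem : inducedIsometry hv hc hN ∈ inducedImage hv Γ c :=
    ⟨_, Subgroup.mem_inf.mpr ⟨mul_mem γ.2 (inv_mem γ₀.2), hN⟩,
      inducedIsometry_lineQuotient hv hc hN⟩
  refine Set.mem_iUnion.mpr ⟨⟨_, hmem⟩, lineQuotient hv ((γ₀ : IsoRn n) y),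
    ⟨(γ₀ : IsoRn n) y, Set.mem_biUnion hγ₀F ⟨y, hyK, rfl⟩, rfl⟩, ?_⟩
  rw [inducedIsometry_lineQuotient, IsometryEquiv.mul_apply, IsometryEquiv.inv_apply_self, hy,
    lineQuotient_lineSection]

end InducedImage

theorem image_of_induced_action_is_crystallographic_general
    (n : ℕ) (Γ : Subgroup (IsoRn n)) (hΓ : IsCrystallographic Γ)
    (c : IsoRn n) (v : Eucl n) (hv : v ≠ 0) (hc : IsTranslationBy c v)
    (hC : IsMaxCyclic (Γ ⊓ Translations n) (Subgroup.zpowers c)) :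
    ∃ φ : Eucl n →ₗ[ℝ] Eucl (n - 1),
      Function.Surjective φ ∧
      LinearMap.ker φ = Submodule.span ℝ {v} ∧
      (∀ x y : Eucl n,
        EMetric.hausdorffEdist (lineThrough v x) (lineThrough v y) = edist (φ x) (φ y)) ∧
      ∃ Δ : Subgroup (IsoRn (n - 1)),
        IsCrystallographic Δ ∧
        ∀ δ : IsoRn (n - 1),
          δ ∈ Δ ↔ ∃ γ ∈ Γ ⊓ Subgroup.normalizer ((Subgroup.zpowers c : Subgroup (IsoRn n)) : Set (IsoRn n)), ∀ x : Eucl n, δ (φ x) = φ (γ x) := by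
  have hcΓ : c ∈ Γ := (hC.1 (Subgroup.mem_zpowers c)).1
  exact ⟨lineQuotient hv, lineQuotient_surjective hv, ker_lineQuotient hv,
    hausdorffEDist_lineThrough hv, inducedImage hv Γ c,
    ⟨isProperlyDiscontinuous_inducedImage hv hc hcΓ hΓ.1,
      isCocompact_inducedImage hv hc hcΓ hΓ.1 hΓ.2⟩, fun _ => Iff.rfl⟩

/-- Let `Γ` be crystallographic of rank `n` with translation subgroup `A`, and `C ≤ A`
maximal cyclic, generated by the translation `c` by `v ≠ 0`.  Identify the space
`ℝ^{n-1}(C)` of `C`-invariant lines with `ℝ^{n-1}` via a surjective linear map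
`φ : ℝⁿ → ℝ^{n-1}` with kernel `ℝv` which is an isometry for the Hausdorff metric on
lines.  Then the image of the induced action `j_C : N_Γ(C)/C → Iso(ℝ^{n-1})` — the group of
all isometries `δ` of `ℝ^{n-1}` satisfying `δ ∘ φ = φ ∘ γ` for some `γ ∈ N_Γ(C)` — is a
crystallographic group of rank `n - 1`. -/
theorem image_of_induced_action_is_crystallographic
    (n : ℕ) (hn : 1 ≤ n) (Γ : Subgroup (IsoRn n)) (hΓ : IsCrystallographic Γ)
    (c : IsoRn n) (v : Eucl n) (hv : v ≠ 0) (hc : IsTranslationBy c v)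
    (hC : IsMaxCyclic (Γ ⊓ Translations n) (Subgroup.zpowers c)) :
    ∃ φ : Eucl n →ₗ[ℝ] Eucl (n - 1),
      Function.Surjective φ ∧
      LinearMap.ker φ = Submodule.span ℝ {v} ∧
      (∀ x y : Eucl n,
        EMetric.hausdorffEdist (lineThrough v x) (lineThrough v y) = edist (φ x) (φ y)) ∧
      ∃ Δ : Subgroup (IsoRn (n - 1)),
        IsCrystallographic Δ ∧
        ∀ δ : IsoRn (n - 1),
          δ ∈ Δ ↔ ∃ γ ∈ Γ ⊓ Subgroup.normalizer ((Subgroup.zpowers c : Subgroup (IsoRn n)) : Set (IsoRn n)), ∀ x : Eucl n, δ (φ x) = φ (γ x) :=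
  image_of_induced_action_is_crystallographic_general n Γ hΓ c v hv hc hC
end
end
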